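/- arXiv:1903.01927 — 2 statements merged into one kernel-verified Lean document; each statement's English description precedes it below -/
import Mathlib

section
/- Let Θ = {0,1}^N and let {P_θ : θ ∈ Θ} be probability measures on a measurable space such that KL(P_θ, P_{θ'}) ≤ β < ∞ whenever the Hamming distance d_H(θ, θ') = 1. Then inf over all estimators θ̃ of max_{θ ∈ Θ} E_θ[d_H(θ, θ̃)] is at least (N/2)·max{exp(−β)/2, 1 − √(β/2)}. -/
/-! Pair each vertex θ of the cube with its neighbour across coordinate `i`: the events
`{θ̃_i ≠ θ_i}` for the two neighbours are complementary, so averaging over the cube bounds the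
worst expected Hamming loss below by `N / 2` times the least value of `P(A) + Q(Aᶜ)` over
measurable `A` and pairs with `KL(P, Q) ≤ β`. That sum dominates the affinity
`∫ min(dP/dQ, 1) dQ`, which is bounded below in two ways with `g = dP/dQ`:
* Pinsker: the affinity is `1 - ½ ∫ |g - 1| dQ`, and Cauchy–Schwarz with weight `g + 2` together
  with `klFun x ≥ 3 (x - 1)² / (2 (x + 2))` gives `(∫ |g - 1| dQ)² ≤ 2 KL`;
* Bretagnolle–Huber: Cauchy–Schwarz with weight `max g 1` gives `(∫ √g dQ)² ≤ 2 · affinity`,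
  and `∫ √g dQ = E_P[exp(-llr/2)] ≥ exp(-KL/2)` by Jensen. -/

open MeasureTheory Real Finset

noncomputable def klDivergence {α : Type*} [MeasurableSpace α] (μ ν : Measure α) : ℝ :=
  ∫ x, MeasureTheory.llr μ ν x ∂μ

open InformationTheory Set

lemma monotoneOn_log_sub_three_halves_mul_div :
    MonotoneOn (fun x => log x - 3 / 2 * ((x - 1) * (x + 5) / (x + 2) ^ 2)) (Ioi 0) := by
  have hderiv : ∀ x : ℝ, 0 < x → HasDerivAt
      (fun x => log x - 3 / 2 * ((x - 1) * (x + 5) / (x + 2) ^ 2))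
      (1 / x - 27 / (x + 2) ^ 3) x := fun x hx => by
    have hq := (((hasDerivAt_id x).sub_const 1).mul ((hasDerivAt_id x).add_const 5)).div
      (((hasDerivAt_id x).add_const 2).pow 2) (pow_ne_zero 2 (by simp only [id]; linarith))
    refine ((hasDerivAt_log hx.ne').sub (hq.const_mul (3 / 2))).congr_deriv ?_
    simp only [id, Pi.pow_apply, Pi.mul_apply]
    field_simp
    ring
  refine monotoneOn_of_hasDerivWithinAt_nonneg (f' := fun x => 1 / x - 27 / (x + 2) ^ 3)
    (convex_Ioi 0) (fun x hx => (hderiv x hx).continuousAt.continuousWithinAt)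
    (fun x hx => ?_) (fun x hx => ?_) <;> rw [interior_Ioi] at hx
  · exact (hderiv x hx).hasDerivWithinAt
  · have hx : 0 < x := hx
    -- `(x + 2)^3 - 27 x = (x - 1)^2 (x + 8)`
    rw [sub_nonneg, div_le_div_iff₀ (by positivity) hx]
    nlinarith [mul_nonneg (sq_nonneg (x - 1)) hx.le]

lemma sq_sub_one_div_add_two_le_two_thirds_mul_klFun {x : ℝ} (hx : 0 ≤ x) :
    (x - 1) ^ 2 / (x + 2) ≤ 2 / 3 * klFun x := by
  set F := fun x : ℝ => log x - 3 / 2 * ((x - 1) * (x + 5) / (x + 2) ^ 2)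
  set h := fun x : ℝ => 2 / 3 * klFun x - (x - 1) ^ 2 / (x + 2)
  have hderiv : ∀ y, 0 < y → HasDerivAt h (2 / 3 * F y) y := by
    intro y hy
    have h2 : y + 2 ≠ 0 := by linarith
    have := ((hasDerivAt_klFun hy.ne').const_mul (2 / 3)).sub
      ((((hasDerivAt_id y).sub_const 1).pow 2).div ((hasDerivAt_id y).add_const 2) h2)
    refine this.congr_deriv ?_
    simp only [F, id, Pi.pow_apply]
    field_simp
    ring
  have hcont : ContinuousOn h (Ici 0) := fun y hy => by
    have : y + 2 ≠ 0 := by simp only [Set.mem_Ici] at hy; linarith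
    have := continuous_klFun.continuousAt (x := y)
    exact ContinuousAt.continuousWithinAt (by fun_prop (disch := assumption))
  have hFmono : MonotoneOn F (Ioi 0) := monotoneOn_log_sub_three_halves_mul_div
  have hF1 : F 1 = 0 := by norm_num [F]
  have hh1 : h 1 = 0 := by simp [h, klFun_one]
  -- `h' = 2 / 3 * F` is increasing and vanishes at `1`, so `h` is least at `1`
  suffices 0 ≤ h x by simp only [h] at this; linarith
  rw [← hh1]
  rcases le_total x 1 with hx1 | hx1
  · refine antitoneOn_of_hasDerivWithinAt_nonpos (f' := fun y => 2 / 3 * F y) (convex_Icc 0 1)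
      (hcont.mono Icc_subset_Ici_self) (fun y hy => ?_) (fun y hy => ?_)
      ⟨hx, hx1⟩ ⟨zero_le_one, le_rfl⟩ hx1 <;> rw [interior_Icc] at hy
    · exact (hderiv y hy.1).hasDerivWithinAt
    · have := hFmono hy.1 (Set.mem_Ioi.2 one_pos) hy.2.le
      linarith
  · refine monotoneOn_of_hasDerivWithinAt_nonneg (f' := fun y => 2 / 3 * F y) (convex_Ici 1)
      (hcont.mono (Ici_subset_Ici.2 zero_le_one))
      (fun y hy => ?_) (fun y hy => ?_) self_mem_Ici hx1 hx1 <;>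
      rw [interior_Ici] at hy
    · exact (hderiv y (zero_lt_one.trans hy)).hasDerivWithinAt
    · have := hFmono (Set.mem_Ioi.2 one_pos) (Set.mem_Ioi.2 (zero_lt_one.trans hy)) hy.le
      linarith

lemma sq_integral_le_integral_sq_div_mul_integral {α : Type*} [MeasurableSpace α]
    {μ : Measure α} {f w : α → ℝ} (hw : ∀ x, 0 < w x) (hf : Integrable f μ)
    (hfw : Integrable (fun x => f x ^ 2 / w x) μ) (hwi : Integrable w μ) :
    (∫ x, f x ∂μ) ^ 2 ≤ (∫ x, f x ^ 2 / w x ∂μ) * ∫ x, w x ∂μ := by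
  have hquad : ∀ t : ℝ,
      0 ≤ (∫ x, w x ∂μ) * (t * t) + (-2 * ∫ x, f x ∂μ) * t + ∫ x, f x ^ 2 / w x ∂μ := by
    intro t
    calc 0 ≤ ∫ x, (f x - t * w x) ^ 2 / w x ∂μ :=
          integral_nonneg fun x => div_nonneg (sq_nonneg _) (hw x).le
      _ = ∫ x, ((t * t) * w x + (-2 * t) * f x + f x ^ 2 / w x) ∂μ := by
          congr 1 with x
          field_simp [(hw x).ne']
          ring
      _ = _ := by
          rw [integral_add (f := fun x => t * t * w x + -2 * t * f x)
              ((hwi.const_mul _).add (hf.const_mul _)) hfw,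
            integral_add (hwi.const_mul _) (hf.const_mul _), integral_const_mul,
            integral_const_mul]
          ring
  have := discrim_le_zero hquad
  rw [discrim] at this
  linarith

section Affinity

variable {α : Type*} [MeasurableSpace α] {P Q : Measure α}

/-- Le Cam's affinity `∫ min(dP, dQ)`, written with respect to `Q`. -/
noncomputable def affinity (P Q : Measure α) : ℝ := ∫ x, min (P.rnDeriv Q x).toReal 1 ∂Q

lemma integrable_min_rnDeriv_one [IsFiniteMeasure P] [IsFiniteMeasure Q] :
    Integrable (fun x => min (P.rnDeriv Q x).toReal 1) Q :=
  Measure.integrable_toReal_rnDeriv.inf (integrable_const 1)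

lemma integrable_sqrt_rnDeriv [IsFiniteMeasure P] [IsFiniteMeasure Q] :
    Integrable (fun x => √((P.rnDeriv Q x).toReal)) Q := by
  refine ((Measure.integrable_toReal_rnDeriv (μ := P)).add (integrable_const 1)).mono'
    (by fun_prop : Measurable _).aestronglyMeasurable (ae_of_all _ fun x => ?_)
  have hx : 0 ≤ (P.rnDeriv Q x).toReal := ENNReal.toReal_nonneg
  rw [Real.norm_of_nonneg (sqrt_nonneg _), Pi.add_apply, Real.sqrt_le_left (by linarith)]
  nlinarith

lemma affinity_le_measureReal_add_compl [IsFiniteMeasure P] [IsFiniteMeasure Q] {A : Set α}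
    (hA : MeasurableSet A) : affinity P Q ≤ P.real A + Q.real Aᶜ := by
  rw [affinity, ← integral_add_compl hA integrable_min_rnDeriv_one]
  gcongr
  · calc ∫ x in A, min (P.rnDeriv Q x).toReal 1 ∂Q ≤ ∫ x in A, (P.rnDeriv Q x).toReal ∂Q :=
          setIntegral_mono integrable_min_rnDeriv_one.integrableOn
            Measure.integrable_toReal_rnDeriv.integrableOn fun x => min_le_left _ _
      _ ≤ P.real A := Measure.setIntegral_toReal_rnDeriv_le (measure_ne_top P A)
  · calc ∫ x in Aᶜ, min (P.rnDeriv Q x).toReal 1 ∂Q ≤ ∫ x in Aᶜ, (1 : ℝ) ∂Q :=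
          setIntegral_mono integrable_min_rnDeriv_one.integrableOn
            (integrable_const 1).integrableOn fun x => min_le_right _ _
      _ = Q.real Aᶜ := by simp

lemma rnDeriv_mul_exp_neg_half_llr (x : α) :
    (P.rnDeriv Q x).toReal * exp (-(llr P Q x / 2)) = √((P.rnDeriv Q x).toReal) := by
  rw [llr_def]
  rcases (ENNReal.toReal_nonneg (a := P.rnDeriv Q x)).eq_or_lt with h0 | hpos
  · simp [← h0]
  · rw [exp_neg, exp_half, exp_log hpos, ← div_eq_mul_inv, div_sqrt]

variable [IsProbabilityMeasure P] [IsProbabilityMeasure Q]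

lemma integral_toReal_rnDeriv_eq_one (hPQ : P ≪ Q) : ∫ x, (P.rnDeriv Q x).toReal ∂Q = 1 := by
  simp [Measure.integral_toReal_rnDeriv hPQ]

lemma affinity_eq_one_sub (hPQ : P ≪ Q) :
    affinity P Q = 1 - (∫ x, |(P.rnDeriv Q x).toReal - 1| ∂Q) / 2 := by
  have hmin : ∀ a : ℝ, min a 1 = (a + 1 - |a - 1|) / 2 := fun a => by
    have := min_add_max a 1
    have := max_sub_min_eq_abs a 1
    rw [abs_sub_comm] at this
    linarith
  simp_rw [affinity, hmin]
  rw [integral_div, integral_sub, integral_add, integral_toReal_rnDeriv_eq_one hPQ]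
  · simp only [integral_const, probReal_univ, smul_eq_mul, mul_one]
    ring
  all_goals fun_prop

lemma klDivergence_eq_integral_klFun (hPQ : P ≪ Q) (hint : Integrable (llr P Q) P) :
    klDivergence P Q = ∫ x, klFun (P.rnDeriv Q x).toReal ∂Q := by
  simp [klDivergence, integral_klFun_rnDeriv hPQ hint]

lemma sq_integral_abs_rnDeriv_sub_one_le (hPQ : P ≪ Q) (hint : Integrable (llr P Q) P) :
    (∫ x, |(P.rnDeriv Q x).toReal - 1| ∂Q) ^ 2 ≤ 2 * klDivergence P Q := by
  set g := fun x => (P.rnDeriv Q x).toReal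
  have hg0 : ∀ x, 0 ≤ g x := fun x => ENNReal.toReal_nonneg
  have hg : Integrable g Q := Measure.integrable_toReal_rnDeriv
  have hkl : Integrable (fun x => klFun (g x)) Q := (integrable_klFun_rnDeriv_iff hPQ).2 hint
  have hpoint : ∀ x, |g x - 1| ^ 2 / (g x + 2) ≤ 2 / 3 * klFun (g x) := fun x => by
    rw [sq_abs]
    exact sq_sub_one_div_add_two_le_two_thirds_mul_klFun (hg0 x)
  have hint2 : Integrable (fun x => |g x - 1| ^ 2 / (g x + 2)) Q :=
    (hkl.const_mul (2 / 3)).mono' (by fun_prop : Measurable _).aestronglyMeasurable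
      (ae_of_all _ fun x => by
        rw [Real.norm_of_nonneg (div_nonneg (sq_nonneg _) (by linarith [hg0 x]))]
        exact hpoint x)
  have hthree : ∫ x, (g x + 2) ∂Q = 3 := by
    rw [integral_add hg (integrable_const 2), integral_toReal_rnDeriv_eq_one hPQ]
    norm_num
  calc (∫ x, |g x - 1| ∂Q) ^ 2 ≤ (∫ x, |g x - 1| ^ 2 / (g x + 2) ∂Q) * ∫ x, (g x + 2) ∂Q :=
        sq_integral_le_integral_sq_div_mul_integral (fun x => by linarith [hg0 x])
          (hg.sub (integrable_const 1)).abs hint2 (hg.add (integrable_const 2))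
    _ ≤ (∫ x, 2 / 3 * klFun (g x) ∂Q) * 3 := by
        rw [hthree]
        exact mul_le_mul_of_nonneg_right (integral_mono hint2 (hkl.const_mul _) hpoint)
          zero_le_three
    _ = 2 * klDivergence P Q := by
        rw [integral_const_mul, klDivergence_eq_integral_klFun hPQ hint]
        ring

lemma one_sub_sqrt_le_affinity (hPQ : P ≪ Q) (hint : Integrable (llr P Q) P) :
    1 - √(klDivergence P Q / 2) ≤ affinity P Q := by
  have := sq_integral_abs_rnDeriv_sub_one_le hPQ hint
  have : (∫ x, |(P.rnDeriv Q x).toReal - 1| ∂Q) / 2 ≤ √(klDivergence P Q / 2) :=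
    Real.le_sqrt_of_sq_le (by linarith)
  rw [affinity_eq_one_sub hPQ]
  linarith

lemma exp_neg_half_klDivergence_le_integral_sqrt (hPQ : P ≪ Q) (hint : Integrable (llr P Q) P) :
    exp (-(klDivergence P Q / 2)) ≤ ∫ x, √((P.rnDeriv Q x).toReal) ∂Q := by
  have hexp : Integrable (fun x => exp (-(llr P Q x / 2))) P := by
    rw [← integrable_rnDeriv_smul_iff hPQ]
    simpa only [smul_eq_mul, rnDeriv_mul_exp_neg_half_llr] using integrable_sqrt_rnDeriv
  calc exp (-(klDivergence P Q / 2)) = exp (∫ x, -(llr P Q x / 2) ∂P) := by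
        rw [integral_neg, integral_div, klDivergence]
    _ ≤ ∫ x, exp (-(llr P Q x / 2)) ∂P :=
        convexOn_exp.map_integral_le continuous_exp.continuousOn isClosed_univ
          (ae_of_all _ fun _ => Set.mem_univ _) (hint.div_const 2).neg hexp
    _ = ∫ x, √((P.rnDeriv Q x).toReal) ∂Q := by
        rw [← integral_rnDeriv_smul hPQ]
        simp only [smul_eq_mul, rnDeriv_mul_exp_neg_half_llr]

lemma sq_integral_sqrt_rnDeriv_le (hPQ : P ≪ Q) :
    (∫ x, √((P.rnDeriv Q x).toReal) ∂Q) ^ 2 ≤ 2 * affinity P Q := by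
  set g := fun x => (P.rnDeriv Q x).toReal
  have hg0 : ∀ x, 0 ≤ g x := fun x => ENNReal.toReal_nonneg
  have hg : Integrable g Q := Measure.integrable_toReal_rnDeriv
  have hmin : Integrable (fun x => min (g x) 1) Q := integrable_min_rnDeriv_one
  have hmax : Integrable (fun x => max (g x) 1) Q := hg.sup (integrable_const 1)
  have haff : affinity P Q = ∫ x, min (g x) 1 ∂Q := rfl
  have hratio : ∀ x, √(g x) ^ 2 / max (g x) 1 = min (g x) 1 := fun x => by
    rw [sq_sqrt (hg0 x)]
    rcases le_total (g x) 1 with h | h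
    · simp [h]
    · simp [h, div_self (one_pos.trans_le h).ne']
  have hint_max : ∫ x, max (g x) 1 ∂Q = 2 - affinity P Q := by
    have : ∀ x, max (g x) 1 = g x + 1 - min (g x) 1 := fun x => by
      linarith [min_add_max (g x) 1]
    simp_rw [this]
    rw [integral_sub (f := fun x => g x + 1) (hg.add (integrable_const 1)) hmin,
      integral_add hg (integrable_const 1), integral_toReal_rnDeriv_eq_one hPQ, haff]
    norm_num
  have haff_nonneg : 0 ≤ affinity P Q :=
    integral_nonneg fun x => le_min (hg0 x) zero_le_one
  calc (∫ x, √(g x) ∂Q) ^ 2 ≤ (∫ x, √(g x) ^ 2 / max (g x) 1 ∂Q) * ∫ x, max (g x) 1 ∂Q := by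
        refine sq_integral_le_integral_sq_div_mul_integral
          (fun x => one_pos.trans_le (le_max_right _ _)) ?_ ?_ hmax
        · exact integrable_sqrt_rnDeriv
        · simpa only [hratio] using hmin
    _ = affinity P Q * (2 - affinity P Q) := by simp only [hratio, hint_max, haff]
    _ ≤ 2 * affinity P Q := by nlinarith

lemma exp_neg_div_two_le_affinity (hPQ : P ≪ Q) (hint : Integrable (llr P Q) P) :
    exp (-klDivergence P Q) / 2 ≤ affinity P Q := by
  calc exp (-klDivergence P Q) / 2 = exp (-(klDivergence P Q / 2)) ^ 2 / 2 := by
        rw [← exp_nat_mul]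
        ring_nf
    _ ≤ (∫ x, √((P.rnDeriv Q x).toReal) ∂Q) ^ 2 / 2 := by
        gcongr
        exact exp_neg_half_klDivergence_le_integral_sqrt hPQ hint
    _ ≤ affinity P Q := by linarith [sq_integral_sqrt_rnDeriv_le hPQ]

lemma max_le_measureReal_add_compl (hPQ : P ≪ Q) (hint : Integrable (llr P Q) P) {β : ℝ}
    (hβ : klDivergence P Q ≤ β) {A : Set α} (hA : MeasurableSet A) :
    max (exp (-β) / 2) (1 - √(β / 2)) ≤ P.real A + Q.real Aᶜ := by
  refine le_trans (max_le ?_ ?_) (affinity_le_measureReal_add_compl hA)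
  · calc exp (-β) / 2 ≤ exp (-klDivergence P Q) / 2 := by gcongr
      _ ≤ affinity P Q := exp_neg_div_two_le_affinity hPQ hint
  · calc 1 - √(β / 2) ≤ 1 - √(klDivergence P Q / 2) := by gcongr
      _ ≤ affinity P Q := one_sub_sqrt_le_affinity hPQ hint

end Affinity

lemma integral_hammingDist_eq_sum {X ι β : Type*} [MeasurableSpace X] [Fintype ι]
    [MeasurableSpace β] [MeasurableSingletonClass β] [DecidableEq β] (μ : Measure X)
    [IsFiniteMeasure μ] (θ : ι → β) {f : X → ι → β} (hf : Measurable f) :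
    ∫ x, (hammingDist θ (f x) : ℝ) ∂μ = ∑ i, μ.real {x | θ i ≠ f x i} := by
  have hA : ∀ i, MeasurableSet {x | θ i ≠ f x i} := fun i => by measurability
  have hsum : ∀ x, (hammingDist θ (f x) : ℝ) = ∑ i, {x | θ i ≠ f x i}.indicator 1 x := fun x => by
    simp [hammingDist, Finset.card_filter, Set.indicator_apply]
  simp_rw [hsum]
  rw [integral_finsetSum _ fun i _ => (integrable_const 1).indicator (hA i)]
  simp_rw [integral_indicator_one (hA _)]

section Hypercube

variable {ι : Type*} [DecidableEq ι]

def flipAt (i : ι) (θ : ι → Bool) : ι → Bool := Function.update θ i (!θ i)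

lemma flipAt_involutive (i : ι) : Function.Involutive (flipAt i) := fun θ => by
  simp [flipAt]

lemma hammingDist_flipAt [Fintype ι] (i : ι) (θ : ι → Bool) : hammingDist θ (flipAt i θ) = 1 := by
  rw [hammingDist, Finset.card_eq_one]
  refine ⟨i, ?_⟩
  ext j
  by_cases h : j = i <;> simp [flipAt, h, Finset.mem_filter, Function.update_apply]

lemma setOf_flipAt_ne_eq_compl {X : Type*} (i : ι) (θ : ι → Bool) (f : X → ι → Bool) :
    {x | flipAt i θ i ≠ f x i} = {x | θ i ≠ f x i}ᶜ := by
  ext x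
  simp [flipAt]

lemma exists_le_sum_of_le_add_flipAt [Fintype ι] (t : (ι → Bool) → ι → ℝ) (c : ℝ)
    (h : ∀ θ i, c ≤ t θ i + t (flipAt i θ) i) :
    ∃ θ, (Fintype.card ι / 2 : ℝ) * c ≤ ∑ i, t θ i := by
  have hpair : ∀ i, (Fintype.card (ι → Bool) : ℝ) * c ≤ 2 * ∑ θ, t θ i := fun i =>
    calc (Fintype.card (ι → Bool) : ℝ) * c = ∑ _θ : ι → Bool, c := by simp
      _ ≤ ∑ θ, (t θ i + t (flipAt i θ) i) := Finset.sum_le_sum fun θ _ => h θ i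
      _ = 2 * ∑ θ, t θ i := by
        rw [Finset.sum_add_distrib, (flipAt_involutive i).bijective.sum_comp (t · i)]
        ring
  have htotal : ∑ _θ : ι → Bool, (Fintype.card ι / 2 : ℝ) * c ≤ ∑ θ, ∑ i, t θ i := by
    rw [Finset.sum_comm]
    calc ∑ _θ : ι → Bool, (Fintype.card ι / 2 : ℝ) * c
        = ∑ _i : ι, (Fintype.card (ι → Bool) : ℝ) * c / 2 := by
          simp only [Finset.sum_const, Finset.card_univ, nsmul_eq_mul]
          ring
      _ ≤ ∑ i, ∑ θ, t θ i := Finset.sum_le_sum fun i _ => by linarith [hpair i]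
  obtain ⟨θ, -, hθ⟩ := Finset.exists_le_of_sum_le Finset.univ_nonempty htotal
  exact ⟨θ, hθ⟩

end Hypercube

theorem assouad_kl_general
    {𝒳 : Type*} [MeasurableSpace 𝒳] (N : ℕ)
    (P : (Fin N → Bool) → Measure 𝒳)
    (hP : ∀ θ, IsProbabilityMeasure (P θ))
    (β : ℝ)
    (hKL : ∀ θ θ' : Fin N → Bool,
      (Finset.univ.filter (fun i => θ i ≠ θ' i)).card = 1 →
      (P θ ≪ P θ') ∧ Integrable (MeasureTheory.llr (P θ) (P θ')) (P θ) ∧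
        klDivergence (P θ) (P θ') ≤ β)
    (est : 𝒳 → (Fin N → Bool)) (hest : Measurable est) :
    ∃ θ : Fin N → Bool,
      (N / 2 : ℝ) * max (Real.exp (-β) / 2) (1 - Real.sqrt (β / 2))
        ≤ ∫ x, ((Finset.univ.filter (fun i => θ i ≠ est x i)).card : ℝ) ∂(P θ) := by
  obtain ⟨θ, hθ⟩ := exists_le_sum_of_le_add_flipAt (fun θ i => (P θ).real {x | θ i ≠ est x i})
    (max (exp (-β) / 2) (1 - √(β / 2))) fun θ i => by
      obtain ⟨hPQ, hint, hβ⟩ := hKL θ (flipAt i θ) (hammingDist_flipAt i θ)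
      rw [setOf_flipAt_ne_eq_compl]
      exact max_le_measureReal_add_compl hPQ hint hβ (by measurability)
  refine ⟨θ, ?_⟩
  rw [← integral_hammingDist_eq_sum (P θ) θ hest, Fintype.card_fin] at hθ
  exact hθ

/-- Kullback–Leibler version of Assouad's lemma: if `KL(P_θ, P_{θ'}) ≤ β` whenever the
Hamming distance of `θ, θ'` is `1`, then any estimator `θ̃` has
`max_θ E_θ[d_H(θ, θ̃)] ≥ (N/2)·max(e^{-β}/2, 1 - √(β/2))`. -/
theorem assouad_kl
    {𝒳 : Type*} [MeasurableSpace 𝒳] (N : ℕ) (hN : 1 ≤ N)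
    (P : (Fin N → Bool) → Measure 𝒳)
    (hP : ∀ θ, IsProbabilityMeasure (P θ))
    (β : ℝ) (hβ : 0 ≤ β)
    (hKL : ∀ θ θ' : Fin N → Bool,
      (Finset.univ.filter (fun i => θ i ≠ θ' i)).card = 1 →
      (P θ ≪ P θ') ∧ Integrable (MeasureTheory.llr (P θ) (P θ')) (P θ) ∧
        klDivergence (P θ) (P θ') ≤ β)
    (est : 𝒳 → (Fin N → Bool)) (hest : Measurable est) :
    ∃ θ : Fin N → Bool,
      (N / 2 : ℝ) * max (Real.exp (-β) / 2) (1 - Real.sqrt (β / 2))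
        ≤ ∫ x, ((Finset.univ.filter (fun i => θ i ≠ est x i)).card : ℝ) ∂(P θ) :=
  assouad_kl_general N P hP β hKL est hest
end

section
/- Let Q be an α-differentially private channel (Markov kernel) from X to Z, i.e. Q(A|x) ≤ e^α Q(A|x') for all measurable A and all x, x'. For probability measures P_ν, P_{ν'} on X, let M_ν = ∫ Q(·|x) dP_ν(x) and M_{ν'} = ∫ Q(·|x) dP_{ν'}(x) be the marginal distributions of the private data. Then the total variation distance satisfies TV(M_ν, M_{ν'}) ≤ (e^α − 1) · TV(P_ν, P_{ν'}). -/
/-!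
For measurable `A`, the function `x ↦ Q(A|x)` takes values in `[0, 1]` and satisfies
`Q(A|x) ≤ e^α Q(A|x')`, so its oscillation is at most `e^α - 1`. Integrating a function of
oscillation `M` against `P_ν - P_ν'` gives at most `M · TV(P_ν, P_ν')`: subtract its infimum and
split along a Hahn decomposition of `P_ν - P_ν'`.
-/

open MeasureTheory Real

/-- Total variation distance between two measures: `sup_A |μ(A) - ν(A)|`. -/
noncomputable def tvDist {X : Type*} [MeasurableSpace X] (μ ν : Measure X) : ℝ :=
  ⨆ A : {A : Set X // MeasurableSet A}, |(μ A).toReal - (ν A).toReal|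

open Set

section TotalVariation

variable {X : Type*} [MeasurableSpace X] {μ ν : Measure X}

lemma tvDist_comm (μ ν : Measure X) : tvDist μ ν = tvDist ν μ := by
  simp only [tvDist, abs_sub_comm]

lemma abs_measureReal_sub_le_tvDist [IsFiniteMeasure μ] [IsFiniteMeasure ν] {A : Set X}
    (hA : MeasurableSet A) : |μ.real A - ν.real A| ≤ tvDist μ ν := by
  refine le_ciSup (f := fun B : {B : Set X // MeasurableSet B} => |μ.real B - ν.real B|)
    ⟨μ.real univ + ν.real univ, ?_⟩ ⟨A, hA⟩
  rintro _ ⟨B, rfl⟩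
  have hμB : μ.real B ≤ μ.real univ := measureReal_mono (subset_univ _)
  have hνB : ν.real B ≤ ν.real univ := measureReal_mono (subset_univ _)
  exact abs_sub_le_of_nonneg_of_le measureReal_nonneg
    (le_add_of_le_of_nonneg hμB measureReal_nonneg) measureReal_nonneg
    (le_add_of_nonneg_of_le measureReal_nonneg hνB)

lemma integral_sub_integral_le_of_le [IsFiniteMeasure μ] (hνμ : ν ≤ μ) {g : X → ℝ} {M : ℝ}
    (hg : Measurable g) (hgM : ∀ x, g x ∈ Icc 0 M) :
    ∫ x, g x ∂μ - ∫ x, g x ∂ν ≤ M * (μ.real univ - ν.real univ) := by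
  have : IsFiniteMeasure ν := isFiniteMeasure_of_le μ hνμ
  have hint (ρ : Measure X) [IsFiniteMeasure ρ] : Integrable g ρ :=
    .of_mem_Icc 0 M hg.aemeasurable (.of_forall hgM)
  calc ∫ x, g x ∂μ - ∫ x, g x ∂ν = ∫ x, g x ∂(μ - ν) := by
        conv_lhs => rw [← Measure.sub_add_cancel_of_le hνμ]
        rw [integral_add_measure (hint _) (hint _), add_sub_cancel_right]
    _ ≤ ∫ _, M ∂(μ - ν) := integral_mono (hint _) (integrable_const M) fun x => (hgM x).2
    _ = M * (μ.real univ - ν.real univ) := by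
        rw [integral_const, smul_eq_mul, mul_comm, measureReal_def,
          Measure.sub_apply MeasurableSet.univ hνμ,
          ENNReal.toReal_sub_of_le (hνμ univ) (measure_ne_top _ _)]
        rfl

/-- Split along a Hahn decomposition `s` of `μ - ν`: on `s` the integrand is at most `M`, and
on `sᶜ` the difference of the integrals is nonpositive. -/
lemma integral_sub_integral_le_mul_tvDist [IsFiniteMeasure μ] [IsFiniteMeasure ν] {g : X → ℝ}
    {M : ℝ} (hM : 0 ≤ M) (hg : Measurable g) (hgM : ∀ x, g x ∈ Icc 0 M) :
    ∫ x, g x ∂μ - ∫ x, g x ∂ν ≤ M * tvDist μ ν := by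
  obtain ⟨s, hs⟩ := exists_isHahnDecomposition ν μ
  have hint (ρ : Measure X) [IsFiniteMeasure ρ] : Integrable g ρ :=
    .of_mem_Icc 0 M hg.aemeasurable (.of_forall hgM)
  calc ∫ x, g x ∂μ - ∫ x, g x ∂ν
      = (∫ x in s, g x ∂μ - ∫ x in s, g x ∂ν) + (∫ x in sᶜ, g x ∂μ - ∫ x in sᶜ, g x ∂ν) := by
        rw [← integral_add_compl hs.measurableSet (hint μ),
          ← integral_add_compl hs.measurableSet (hint ν)]
        ring
    _ ≤ M * ((μ.restrict s).real univ - (ν.restrict s).real univ) + 0 :=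
        add_le_add (integral_sub_integral_le_of_le hs.le_on hg hgM)
          (sub_nonpos.2 (integral_mono_measure hs.ge_on_compl
            (.of_forall fun x => (hgM x).1) (hint _)))
    _ ≤ M * tvDist μ ν := by
        rw [add_zero, measureReal_restrict_apply_univ, measureReal_restrict_apply_univ]
        exact mul_le_mul_of_nonneg_left
          ((le_abs_self _).trans (abs_measureReal_sub_le_tvDist hs.measurableSet)) hM

/-- Shifting `f` by its infimum reduces to a `[0, M]`-valued integrand. -/
lemma abs_integral_sub_integral_le_mul_tvDist [IsProbabilityMeasure μ] [IsProbabilityMeasure ν]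
    {f : X → ℝ} {M : ℝ} (hf : Measurable f) (hosc : ∀ x y, f x - f y ≤ M) :
    |∫ x, f x ∂μ - ∫ x, f x ∂ν| ≤ M * tvDist μ ν := by
  have := nonempty_of_isProbabilityMeasure μ
  obtain ⟨x₀⟩ := ‹Nonempty X›
  have hM : 0 ≤ M := by simpa using hosc x₀ x₀
  have hbdd : BddBelow (range f) :=
    ⟨f x₀ - M, by rintro _ ⟨y, rfl⟩; exact sub_le_comm.1 (hosc x₀ y)⟩
  set c := ⨅ x, f x
  have hgM (x : X) : f x - c ∈ Icc 0 M :=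
    ⟨sub_nonneg.2 (ciInf_le hbdd x), sub_le_comm.1 (le_ciInf fun y => sub_le_comm.1 (hosc x y))⟩
  have hshift (ρ : Measure X) [IsProbabilityMeasure ρ] : ∫ x, f x - c ∂ρ = ∫ x, f x ∂ρ - c := by
    have hfρ : Integrable f ρ :=
      .of_mem_Icc c (c + M) hf.aemeasurable (.of_forall fun x => by
        constructor <;> linarith [(hgM x).1, (hgM x).2])
    rw [integral_sub hfρ (integrable_const c), integral_const, probReal_univ, one_smul]
  have key (ρ ρ' : Measure X) [IsProbabilityMeasure ρ] [IsProbabilityMeasure ρ'] :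
      ∫ x, f x ∂ρ - ∫ x, f x ∂ρ' ≤ M * tvDist ρ ρ' := by
    have := integral_sub_integral_le_mul_tvDist (μ := ρ) (ν := ρ') hM (hf.sub_const c) hgM
    rwa [hshift, hshift, sub_sub_sub_cancel_right] at this
  refine abs_sub_le_iff.2 ⟨key μ ν, ?_⟩
  rw [tvDist_comm]
  exact key ν μ

end TotalVariation

lemma measureReal_sub_le_exp_sub_one {Z : Type*} [MeasurableSpace Z] {μ ν : Measure Z}
    [IsProbabilityMeasure ν] {α : ℝ} (hα : 0 ≤ α) {A : Set Z}
    (h : μ A ≤ ENNReal.ofReal (exp α) * ν A) : μ.real A - ν.real A ≤ exp α - 1 := by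
  have hreal : μ.real A ≤ exp α * ν.real A := by
    simpa [Measure.real, ENNReal.toReal_mul, (exp_pos α).le] using
      ENNReal.toReal_mono (ENNReal.mul_ne_top ENNReal.ofReal_ne_top (measure_ne_top ν A)) h
  nlinarith [one_le_exp hα, measureReal_le_one (μ := ν) (s := A)]

lemma measureReal_bind_eq_integral {X Z : Type*} [MeasurableSpace X] [MeasurableSpace Z]
    {Q : X → Measure Z} (hQ : Measurable Q) [∀ x, IsFiniteMeasure (Q x)] (P : Measure X)
    {A : Set Z} (hA : MeasurableSet A) : (P.bind Q).real A = ∫ x, (Q x).real A ∂P := by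
  rw [measureReal_def, Measure.bind_apply hA hQ.aemeasurable,
    ← integral_toReal (f := fun x => Q x A) ((Measure.measurable_coe hA).comp hQ).aemeasurable
      (.of_forall fun x => measure_lt_top (Q x) A)]
  rfl

/-- Contraction of total variation under an `α`-differentially private channel:
`TV(M_ν, M_{ν'}) ≤ (e^α - 1) TV(P_ν, P_{ν'})`, where `M` denotes the marginal of the
private data. -/
theorem dp_tv_contraction
    {X Z : Type*} [MeasurableSpace X] [MeasurableSpace Z]
    (Q : X → Measure Z) (hQm : Measurable Q)
    (hQprob : ∀ x, IsProbabilityMeasure (Q x))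
    (α : ℝ) (hα : 0 ≤ α)
    (hDP : ∀ A : Set Z, MeasurableSet A → ∀ x x' : X,
      Q x A ≤ ENNReal.ofReal (Real.exp α) * Q x' A)
    (Pν Pν' : Measure X) [IsProbabilityMeasure Pν] [IsProbabilityMeasure Pν'] :
    tvDist (Pν.bind Q) (Pν'.bind Q) ≤ (Real.exp α - 1) * tvDist Pν Pν' := by
  have : Nonempty {A : Set Z // MeasurableSet A} := ⟨⟨∅, .empty⟩⟩
  refine ciSup_le fun ⟨A, hA⟩ => ?_
  change |(Pν.bind Q).real A - (Pν'.bind Q).real A| ≤ _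
  rw [measureReal_bind_eq_integral hQm _ hA, measureReal_bind_eq_integral hQm _ hA]
  exact abs_integral_sub_integral_le_mul_tvDist
    ((Measure.measurable_coe hA).comp hQm).ennreal_toReal
    fun x y => measureReal_sub_le_exp_sub_one hα (hDP A hA x y)
end
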